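/- Let E be a commutative ring and σ : E → E a ring endomorphism. Suppose there exist an integer n ≥ 1 and idempotents e_0, …, e_{n−1} ∈ E with e_i·e_j = 0 for i ≠ j and e_0 + ⋯ + e_{n−1} = 1, such that for each i the ring E·e_i (a commutative ring with unit e_i) is a field and σ(e_i) = e_{(i+1) mod n}. Then the fixed subring E^σ := { x ∈ E : σ(x) = x } is a field. -/

import Mathlib

/-!
A nonzero fixed element `x` has a nonzero component `x * e i`. Since `E * e i` is a field,
`x * e i` divides `e i`; applying `σ` shows that `x * e (i + 1)` divides `e (i + 1) ≠ 0`, so it is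
nonzero as well. As `σ` permutes the factors cyclically, every component of `x` is nonzero, hence
`x` divides every `e i` and thus `∑ i, e i = 1`. So `x` is a unit of `E`, and the inverse of a
`σ`-fixed unit is again `σ`-fixed.
-/

noncomputable section

/-- The fixed subring `E^σ = { x ∈ E | σ x = x }` of a ring endomorphism. -/
def fixedSubring (E : Type) [CommRing E] (σ : E →+* E) : Subring E where
  carrier := {x | σ x = x}
  one_mem' := map_one σ
  mul_mem' := fun {a b} ha hb => by
    show σ (a * b) = a * b
    rw [map_mul, ha, hb]
  zero_mem' := map_zero σ
  add_mem' := fun {a b} ha hb => by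
    show σ (a + b) = a + b
    rw [map_add, ha, hb]
  neg_mem' := fun {a} ha => by
    show σ (-a) = -a
    rw [map_neg, ha]

open Fin.NatCast in
theorem Fin.forall_of_imp_add_one {n : ℕ} [NeZero n] {P : Fin n → Prop}
    (hstep : ∀ i, P i → P (i + 1)) {i₀ : Fin n} (h₀ : P i₀) (j : Fin n) : P j := by
  have hiter : ∀ k : ℕ, P (i₀ + (k : Fin n)) := by
    intro k
    induction k with
    | zero => simpa using h₀
    | succ k ih => simpa [← add_assoc] using hstep _ ih
  simpa using hiter (j - i₀).val

section

variable {E : Type*} [CommRing E]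

theorem exists_mul_ne_zero_of_sum_eq_one {ι : Type*} [Fintype ι] {e : ι → E}
    (hsum : ∑ i, e i = 1) {x : E} (hx : x ≠ 0) : ∃ i, x * e i ≠ 0 := by
  by_contra! h
  apply hx
  rw [← mul_one x, ← hsum, Finset.mul_sum]
  exact Finset.sum_eq_zero fun i _ => h i

theorem mul_dvd_of_mul_ne_zero {e : E} (he : e * e = e)
    (hinv : ∀ x : E, x * e = x → x ≠ 0 → ∃ y : E, y * e = y ∧ x * y = e)
    {x : E} (hx : x * e ≠ 0) : x * e ∣ e := by
  obtain ⟨y, -, hy⟩ := hinv (x * e) (by rw [mul_assoc, he]) hx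
  exact Dvd.intro y hy

theorem mul_ne_zero_of_map_eq {σ : E →+* E} {x a b : E} (hx : σ x = x) (ha : σ a = b)
    (hb : b ≠ 0) (hdvd : x * a ∣ a) : x * b ≠ 0 := by
  intro h
  have := map_dvd σ hdvd
  rw [map_mul, hx, ha, h, zero_dvd_iff] at this
  exact hb this

theorem map_inv_eq_of_map_eq {σ : E →+* E} (u : Eˣ) (hu : σ u = u) :
    σ ↑u⁻¹ = ↑u⁻¹ :=
  u.isUnit.mul_left_cancel <| by
    rw [← hu, ← map_mul, Units.mul_inv, map_one, hu, Units.mul_inv]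

end

theorem isField_fixedSubring_of_isUnit {E : Type} [CommRing E] {σ : E →+* E}
    (h₁ : (1 : E) ≠ 0) (hunit : ∀ x : E, σ x = x → x ≠ 0 → IsUnit x) :
    IsField (fixedSubring E σ) := by
  refine ⟨⟨0, 1, fun h => h₁ (congrArg Subtype.val h).symm⟩, mul_comm, fun {a} ha => ?_⟩
  obtain ⟨u, hu⟩ := hunit a a.2 fun h => ha (Subtype.ext h)
  have hfix : σ u = u := hu ▸ a.2
  exact ⟨⟨↑u⁻¹, map_inv_eq_of_map_eq u hfix⟩, Subtype.ext <| by
    show (a : E) * ↑u⁻¹ = 1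
    rw [← hu, u.mul_inv]⟩

/-- If a commutative ring `E` with endomorphism `σ` is a finite product of
fields (cut out by orthogonal idempotents `e 0, …, e (n-1)` summing to `1`) that are
transitively permuted by `σ`, then the fixed subring `E^σ` is a field. -/
theorem statement_1 (E : Type) [CommRing E] (σ : E →+* E)
    (n : ℕ) (hn : 1 ≤ n) (e : Fin n → E)
    (hidem : ∀ i, e i * e i = e i)
    (hsum : ∑ i, e i = 1)
    -- each `E·e i` is a field (a commutative ring with unit `e i`)
    (hfield : ∀ i, e i ≠ 0 ∧
      ∀ x : E, x * e i = x → x ≠ 0 → ∃ y : E, y * e i = y ∧ x * y = e i)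
    -- `σ` carries the `i`-th factor to the `(i+1)`-th: `σ (e i) = e (i+1 mod n)`
    (hperm : ∀ i : Fin n, σ (e i) = e ⟨((i : ℕ) + 1) % n, Nat.mod_lt _ (by omega)⟩) :
    IsField (fixedSubring E σ) := by
  have : NeZero n := ⟨by omega⟩
  have hsucc : ∀ i, σ (e i) = e (i + 1) := fun i => by
    rw [hperm]; congr 1; ext; simp [Fin.val_add]
  have hdvd : ∀ x i, x * e i ≠ 0 → x * e i ∣ e i := fun x i =>
    mul_dvd_of_mul_ne_zero (hidem i) (hfield i).2
  have h₁ : (1 : E) ≠ 0 := fun h => (hfield 0).1 (by rw [← mul_one (e 0), h, mul_zero])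
  refine isField_fixedSubring_of_isUnit h₁ fun x hx hx₀ => ?_
  obtain ⟨i₀, hi₀⟩ := exists_mul_ne_zero_of_sum_eq_one hsum hx₀
  have hall : ∀ j, x * e j ≠ 0 := Fin.forall_of_imp_add_one
    (fun i hi => mul_ne_zero_of_map_eq hx (hsucc i) (hfield _).1 (hdvd x i hi)) hi₀
  exact isUnit_of_dvd_one <| hsum ▸ Finset.dvd_sum fun i _ =>
    (dvd_mul_right x (e i)).trans (hdvd x i (hall i))

end
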